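/- For every pair of adjacent vertices a, c of the Farey graph F, the set of triangles of F containing both a and c is finite with exactly two elements. Equivalently, any edge of F is contained in exactly two triangles of F. -/

import Mathlib

/-- A coprime pair of integers, representing a vertex of the Farey graph. -/
def FareyPair : Type := {p : ℤ × ℤ // IsCoprime p.1 p.2}

/-- The equivalence identifying a coprime pair with its negation. -/
def fareySetoid : Setoid FareyPair where
  r x y := x.val = y.val ∨ x.val = -y.val
  iseqv := by
    refine ⟨fun x => Or.inl rfl, ?_, ?_⟩
    · rintro x y (h | h)
      · exact Or.inl h.symm
      · exact Or.inr (by rw [h, neg_neg])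
    · rintro x y z (h1 | h1) (h2 | h2)
      · exact Or.inl (h1.trans h2)
      · exact Or.inr (by rw [h1, h2])
      · exact Or.inr (by rw [h1, h2])
      · exact Or.inl (by rw [h1, h2, neg_neg])

/-- A vertex of the Farey graph: a coprime pair of integers up to simultaneous
negation. -/
def FareyVertex : Type := Quotient fareySetoid

/-- The vertex `[p:q]` of the Farey graph. -/
def fareyMk (p q : ℤ) (h : IsCoprime p q) : FareyVertex :=
  Quotient.mk fareySetoid ⟨(p, q), h⟩

/-- The determinant `p * s - q * r` of two pairs `(p, q)` and `(r, s)`. -/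
def fareyDet (x y : FareyPair) : ℤ := x.val.1 * y.val.2 - x.val.2 * y.val.1

private lemma farey_abs_helper (a b : ℤ) (h : a = b ∨ a = -b) :
    (|a| = 1) = (|b| = 1) := by
  rcases h with h | h <;> (rw [h]; try simp)

/-- The Farey graph: vertices `[p:q]` and `[r:s]` are adjacent iff `|ps - qr| = 1`. -/
def FareyGraph : SimpleGraph FareyVertex where
  Adj := Quotient.lift₂ (fun x y => |fareyDet x y| = 1) (by
    rintro x y x' y' (h1 | h1) (h2 | h2) <;> apply farey_abs_helper
    · exact Or.inl (by simp only [fareyDet, h1, h2])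
    · refine Or.inr ?_
      simp only [fareyDet, h1, h2, Prod.fst_neg, Prod.snd_neg]
      ring
    · refine Or.inr ?_
      simp only [fareyDet, h1, h2, Prod.fst_neg, Prod.snd_neg]
      ring
    · refine Or.inl ?_
      simp only [fareyDet, h1, h2, Prod.fst_neg, Prod.snd_neg]
      ring)
  symm := by
    refine ⟨?_⟩
    intro u v
    refine Quotient.inductionOn₂ u v ?_
    intro x y h
    change |fareyDet x y| = 1 at h
    change |fareyDet y x| = 1
    rw [show fareyDet y x = -fareyDet x y from by simp only [fareyDet]; ring,
      abs_neg]
    exact h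
  loopless := by
    refine ⟨?_⟩
    intro u
    refine Quotient.inductionOn u ?_
    intro x h
    change |fareyDet x x| = 1 at h
    rw [show fareyDet x x = 0 from by simp only [fareyDet]; ring] at h
    simp at h

noncomputable instance : DecidableEq FareyVertex := Classical.decEq _

/-!
Write the edge as `[x]—[y]` with `ε = det(x, y) = ±1`. By Cramer's rule every vector `w` satisfies
`ε • w = det(w, y) • x + det(x, w) • y`, so a common neighbour `[w]` of `[x]` and `[y]` has
`w = ±(x ± y)`: the edge has exactly the two common neighbours `[x + y]` and `[x - y]`, and in any
graph the triangles on an edge correspond to the common neighbours of its ends.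
-/

namespace SimpleGraph

variable {V : Type*} [DecidableEq V] {G : SimpleGraph V} {a c : V}

theorem setOf_isNClique_three_mem_mem_eq_image (hac : G.Adj a c) :
    {t : Finset V | G.IsNClique 3 t ∧ a ∈ t ∧ c ∈ t} =
      (fun b => {a, c, b}) '' G.commonNeighbors a c := by
  ext t
  simp only [Set.mem_ofPred_eq, Set.mem_image, mem_commonNeighbors]
  constructor
  · rintro ⟨ht, hat, hct⟩
    have hca : c ∈ t.erase a := Finset.mem_erase.2 ⟨hac.ne', hct⟩
    obtain ⟨b, hb⟩ : ∃ b, (t.erase a).erase c = {b} := by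
      rw [← Finset.card_eq_one, Finset.card_erase_of_mem hca,
        Finset.card_erase_of_mem hat, ht.card_eq]
    have htb : t = {a, c, b} := by
      rw [← hb, Finset.insert_erase hca, Finset.insert_erase hat]
    subst htb
    exact ⟨b, (is3Clique_triple_iff.1 ht).2, rfl⟩
  · rintro ⟨b, ⟨hab, hcb⟩, rfl⟩
    exact ⟨is3Clique_triple_iff.2 ⟨hac, hab, hcb⟩, by simp, by simp⟩

theorem injOn_insert_insert_singleton_commonNeighbors :
    Set.InjOn (fun b => ({a, c, b} : Finset V)) (G.commonNeighbors a c) := by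
  intro b hb b' _ h
  rw [mem_commonNeighbors] at hb
  have hb' : b ∈ ({a, c, b'} : Finset V) := by
    rw [← show ({a, c, b} : Finset V) = {a, c, b'} from h]
    simp
  simp only [Finset.mem_insert, Finset.mem_singleton] at hb'
  rcases hb' with rfl | rfl | rfl
  · exact (hb.1.ne rfl).elim
  · exact (hb.2.ne rfl).elim
  · rfl

theorem encard_setOf_isNClique_three_mem_mem (hac : G.Adj a c) :
    {t : Finset V | G.IsNClique 3 t ∧ a ∈ t ∧ c ∈ t}.encard = (G.commonNeighbors a c).encard := by
  rw [setOf_isNClique_three_mem_mem_eq_image hac,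
    injOn_insert_insert_singleton_commonNeighbors.encard_image]

end SimpleGraph

theorem isCoprime_of_abs_fareyDet_eq_one {u : ℤ × ℤ} (y : FareyPair)
    (h : |u.1 * y.val.2 - u.2 * y.val.1| = 1) : IsCoprime u.1 u.2 := by
  rcases abs_eq zero_le_one |>.1 h with h | h
  · exact ⟨y.val.2, -y.val.1, by linarith⟩
  · exact ⟨-y.val.2, y.val.1, by linarith⟩

theorem fareyDet_swap (x y : FareyPair) : fareyDet y x = -fareyDet x y := by
  simp only [fareyDet]
  ring

/-- Cramer's rule in dimension two. -/
theorem fareyDet_smul_val (x y w : FareyPair) :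
    fareyDet x y • w.val = fareyDet w y • x.val + fareyDet x w • y.val := by
  ext <;> simp only [fareyDet, Prod.smul_fst, Prod.smul_snd, Prod.fst_add, Prod.snd_add,
    smul_eq_mul] <;> ring

namespace FareyPair

def toVertex (x : FareyPair) : FareyVertex := Quotient.mk fareySetoid x

theorem exists_toVertex_eq (v : FareyVertex) : ∃ x : FareyPair, x.toVertex = v :=
  Quotient.exists_rep v

theorem fareyGraph_adj_toVertex {x y : FareyPair} :
    FareyGraph.Adj x.toVertex y.toVertex ↔ |fareyDet x y| = 1 := Iff.rfl

theorem toVertex_eq_of_val_eq_smul {x w : FareyPair} {s : ℤ} (hs : |s| = 1)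
    (h : w.val = s • x.val) : w.toVertex = x.toVertex := by
  refine Quotient.sound ?_
  rcases abs_eq zero_le_one |>.1 hs with rfl | rfl
  · exact Or.inl (by simpa using h)
  · exact Or.inr (by simpa using h)

theorem fareyDet_eq_zero_of_toVertex_eq {x y : FareyPair} (h : x.toVertex = y.toVertex) :
    fareyDet x y = 0 := by
  rcases Quotient.exact h with h | h <;>
    simp only [fareyDet, h, Prod.fst_neg, Prod.snd_neg] <;> ring

def addSMul (x y : FareyPair) (h : |fareyDet x y| = 1) (k : ℤ) : FareyPair :=
  ⟨x.val + k • y.val, isCoprime_of_abs_fareyDet_eq_one y <| by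
    simpa only [fareyDet, Prod.fst_add, Prod.snd_add, Prod.smul_fst, Prod.smul_snd,
      smul_eq_mul, show ∀ a b c d : ℤ, (a + k * c) * d - (b + k * d) * c = a * d - b * c
        from fun _ _ _ _ => by ring] using h⟩

variable (x y : FareyPair) (h : |fareyDet x y| = 1)

theorem fareyDet_addSMul_left (k : ℤ) : fareyDet (x.addSMul y h k) y = fareyDet x y := by
  simp only [fareyDet, addSMul, Prod.fst_add, Prod.snd_add, Prod.smul_fst, Prod.smul_snd,
    smul_eq_mul]
  ring

theorem fareyDet_addSMul_right (k : ℤ) : fareyDet x (x.addSMul y h k) = k * fareyDet x y := by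
  simp only [fareyDet, addSMul, Prod.fst_add, Prod.snd_add, Prod.smul_fst, Prod.smul_snd,
    smul_eq_mul]
  ring

theorem fareyDet_addSMul_addSMul (k l : ℤ) :
    fareyDet (x.addSMul y h k) (x.addSMul y h l) = (l - k) * fareyDet x y := by
  simp only [fareyDet, addSMul, Prod.fst_add, Prod.snd_add, Prod.smul_fst, Prod.smul_snd,
    smul_eq_mul]
  ring

theorem toVertex_addSMul_one_ne_neg_one :
    (x.addSMul y h 1).toVertex ≠ (x.addSMul y h (-1)).toVertex := by
  intro heq
  have h0 := fareyDet_eq_zero_of_toVertex_eq heq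
  rw [fareyDet_addSMul_addSMul] at h0
  rw [show fareyDet x y = 0 by linarith] at h
  simp at h

theorem exists_val_eq_smul_addSMul {w : FareyPair} (hxw : |fareyDet x w| = 1)
    (hyw : |fareyDet y w| = 1) :
    ∃ s k : ℤ, |s| = 1 ∧ |k| = 1 ∧ w.val = s • (x.addSMul y h k).val := by
  have hα : |fareyDet w y| = 1 := by rw [fareyDet_swap, abs_neg, hyw]
  have hεε : fareyDet x y * fareyDet x y = 1 := by rw [← abs_mul_abs_self, h, one_mul]
  have hαα : fareyDet w y * fareyDet w y = 1 := by rw [← abs_mul_abs_self, hα, one_mul]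
  have hcramer := fareyDet_smul_val x y w
  refine ⟨fareyDet x y * fareyDet w y, fareyDet w y * fareyDet x w,
    by rw [abs_mul, h, hα, one_mul], by rw [abs_mul, hα, hxw, one_mul], ?_⟩
  -- multiply Cramer's rule by `det(x, y)`; both `det(x, y)` and `det(w, y)` square to `1`
  rw [Prod.ext_iff] at hcramer ⊢
  simp only [addSMul, Prod.smul_fst, Prod.smul_snd, Prod.fst_add, Prod.snd_add,
    smul_eq_mul] at hcramer ⊢
  constructor
  · linear_combination fareyDet x y * hcramer.1 - w.val.1 * hεε -
      fareyDet x y * fareyDet x w * y.val.1 * hαα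
  · linear_combination fareyDet x y * hcramer.2 - w.val.2 * hεε -
      fareyDet x y * fareyDet x w * y.val.2 * hαα

theorem adj_addSMul {k : ℤ} (hk : |k| = 1) :
    FareyGraph.Adj x.toVertex (x.addSMul y h k).toVertex ∧
      FareyGraph.Adj y.toVertex (x.addSMul y h k).toVertex := by
  refine ⟨?_, ?_⟩ <;> rw [fareyGraph_adj_toVertex]
  · rw [fareyDet_addSMul_right, abs_mul, hk, h, one_mul]
  · rw [fareyDet_swap, fareyDet_addSMul_left, abs_neg, h]

end FareyPair

open FareyPair

theorem fareyGraph_commonNeighbors_toVertex (x y : FareyPair) (h : |fareyDet x y| = 1) :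
    FareyGraph.commonNeighbors x.toVertex y.toVertex =
      {(x.addSMul y h 1).toVertex, (x.addSMul y h (-1)).toVertex} := by
  ext z
  obtain ⟨w, rfl⟩ := exists_toVertex_eq z
  simp only [SimpleGraph.mem_commonNeighbors, Set.mem_insert_iff, Set.mem_singleton_iff]
  constructor
  · rintro ⟨hxw, hyw⟩
    obtain ⟨s, k, hs, hk, hw⟩ := exists_val_eq_smul_addSMul x y h hxw hyw
    rcases abs_eq zero_le_one |>.1 hk with rfl | rfl
    · exact Or.inl (toVertex_eq_of_val_eq_smul hs hw)
    · exact Or.inr (toVertex_eq_of_val_eq_smul hs hw)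
  · rintro (hw | hw) <;> rw [hw]
    · exact adj_addSMul x y h abs_one
    · exact adj_addSMul x y h (by simp)

/-- Every edge of the Farey graph is contained in exactly two triangles. -/
theorem fareyGraph_two_triangles_on_edge (a c : FareyVertex)
    (hac : FareyGraph.Adj a c) :
    {t : Finset FareyVertex | FareyGraph.IsNClique 3 t ∧ a ∈ t ∧ c ∈ t}.Finite ∧
    {t : Finset FareyVertex | FareyGraph.IsNClique 3 t ∧ a ∈ t ∧ c ∈ t}.ncard = 2 := by
  obtain ⟨x, rfl⟩ := exists_toVertex_eq a
  obtain ⟨y, rfl⟩ := exists_toVertex_eq c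
  have h : |fareyDet x y| = 1 := fareyGraph_adj_toVertex.1 hac
  have htwo : {t : Finset FareyVertex | FareyGraph.IsNClique 3 t ∧ x.toVertex ∈ t ∧
      y.toVertex ∈ t}.encard = 2 := by
    rw [SimpleGraph.encard_setOf_isNClique_three_mem_mem hac,
      fareyGraph_commonNeighbors_toVertex x y h,
      Set.encard_pair (toVertex_addSMul_one_ne_neg_one x y h)]
  exact ⟨Set.finite_of_encard_eq_coe htwo, by rw [Set.ncard_def, htwo]; rfl⟩
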